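/- arXiv:2506.10203 — 8 statements merged into one kernel-verified Lean document; each statement's English description precedes it below -/
import Mathlib

section
/- Fix λ > 0, ω_n > 0, ξ ∈ (0,1], and β > 0. Then there exists a unique pair (A, ω) with A > 0 and ω ∈ (0, π/β) satisfying the harmonic balance conditions (4/(Aπ))·sin(ωβ/2) = |(ω_n² − ω²) + i·2ξω_nω| / λ and (π − ωβ)/2 = arg((ω_n² − ω²) + i·2ξω_nω), where arg denotes the principal argument of a complex number (Complex.arg). -/
/-!
Write `z(ω) = ωₙ² - ω² + 2iξωₙω`. For `ω > 0` the point `z(ω)` lies in the upper half plane and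
`cot (arg z(ω)) = (ωₙ² - ω²) / (2ξωₙω)` decreases strictly, so `arg z(ω)` increases strictly.
Hence `ω ↦ arg z(ω) + ωβ/2` is continuous and strictly increasing on `[0, π/β]`, runs from `0`
to a value above `π/2`, and so meets the phase condition `arg z(ω) + ωβ/2 = π/2` exactly once.
Once `ω` is fixed, the magnitude condition is linear in `1/A`.
-/

open Real Set

theorem StrictMonoOn.existsUnique_mem_Ioo_eq {α δ : Type*} [ConditionallyCompleteLinearOrder α]
    [TopologicalSpace α] [OrderTopology α] [DenselyOrdered α] [LinearOrder δ]
    [TopologicalSpace δ] [OrderClosedTopology δ] {f : α → δ} {a b : α} {c : δ} (hab : a ≤ b)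
    (hmono : StrictMonoOn f (Ioo a b)) (hcont : ContinuousOn f (Icc a b)) (ha : f a < c)
    (hb : c < f b) : ∃! x, x ∈ Ioo a b ∧ f x = c := by
  obtain ⟨x, hx, hfx⟩ := intermediate_value_Ioo hab hcont ⟨ha, hb⟩
  exact ⟨x, ⟨hx, hfx⟩, fun y ⟨hy, hfy⟩ => hmono.injOn hy hx (hfy.trans hfx.symm)⟩

theorem ExistsUnique.prod_of_forall {α β : Type*} {P : β → Prop} {Q : α → β → Prop}
    (hP : ∃! b, P b) (hQ : ∀ b, P b → ∃! a, Q a b) : ∃! p : α × β, P p.2 ∧ Q p.1 p.2 := by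
  obtain ⟨b, hb, hb_unique⟩ := hP
  obtain ⟨a, ha, ha_unique⟩ := hQ b hb
  refine ⟨(a, b), ⟨hb, ha⟩, fun ⟨a', b'⟩ ⟨hb', ha'⟩ => ?_⟩
  obtain rfl : b' = b := hb_unique b' hb'
  rw [ha_unique a' ha']

theorem Real.cot_lt_cot_of_lt {x y : ℝ} (hx : 0 < x) (hxy : x < y) (hy : y < π) :
    cot y < cot x := by
  have hsx : 0 < sin x := sin_pos_of_pos_of_lt_pi hx (hxy.trans hy)
  have hsy : 0 < sin y := sin_pos_of_pos_of_lt_pi (hx.trans hxy) hy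
  have hsub : 0 < sin (y - x) := sin_pos_of_pos_of_lt_pi (by linarith) (by linarith)
  rw [cot_eq_cos_div_sin, cot_eq_cos_div_sin, div_lt_div_iff₀ hsy hsx]
  rw [sin_sub] at hsub
  linarith

theorem Real.strictAntiOn_cot : StrictAntiOn cot (Ioo 0 π) :=
  fun _ hx _ hy hxy => cot_lt_cot_of_lt hx.1 hxy hy.2

namespace Complex

theorem arg_mem_Ioo_of_im_pos {z : ℂ} (hz : 0 < z.im) : arg z ∈ Ioo 0 π := by
  refine ⟨(arg_nonneg_iff.2 hz.le).lt_of_ne fun h => ?_, arg_lt_pi_iff.2 (Or.inr hz.ne')⟩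
  exact hz.ne' (arg_eq_zero_iff.1 h.symm).2

theorem cot_arg {z : ℂ} (hz : z ≠ 0) : Real.cot (arg z) = z.re / z.im := by
  have : ‖z‖ ≠ 0 := norm_ne_zero_iff.2 hz
  rw [Real.cot_eq_cos_div_sin, cos_arg hz, sin_arg, div_div_div_cancel_right₀ this]

theorem arg_lt_arg_iff_of_im_pos {z w : ℂ} (hz : 0 < z.im) (hw : 0 < w.im) :
    arg z < arg w ↔ w.re / w.im < z.re / z.im := by
  rw [← cot_arg (ne_of_apply_ne im hw.ne'), ← cot_arg (ne_of_apply_ne im hz.ne')]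
  exact (Real.strictAntiOn_cot.lt_iff_gt (arg_mem_Ioo_of_im_pos hw)
    (arg_mem_Ioo_of_im_pos hz)).symm

end Complex

/-- `(iω)² + 2ξωₙ(iω) + ωₙ²`, so that `P(iω) = λ / dampedOscillatorSymbol ωₙ ξ ω`. -/
def dampedOscillatorSymbol (ωn ξ ω : ℝ) : ℂ :=
  ((ωn ^ 2 - ω ^ 2 : ℝ) : ℂ) + Complex.I * ((2 * ξ * ωn * ω : ℝ) : ℂ)

section dampedOscillatorSymbol

variable {ωn ξ : ℝ}

@[simp]
theorem dampedOscillatorSymbol_re (ω : ℝ) :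
    (dampedOscillatorSymbol ωn ξ ω).re = ωn ^ 2 - ω ^ 2 := by
  simp [dampedOscillatorSymbol, -Complex.ofReal_pow]

@[simp]
theorem dampedOscillatorSymbol_im (ω : ℝ) :
    (dampedOscillatorSymbol ωn ξ ω).im = 2 * ξ * ωn * ω := by
  simp [dampedOscillatorSymbol, -Complex.ofReal_pow]

theorem arg_dampedOscillatorSymbol_zero : (dampedOscillatorSymbol ωn ξ 0).arg = 0 := by
  simpa [dampedOscillatorSymbol] using Complex.arg_ofReal_of_nonneg (sq_nonneg ωn)

theorem continuous_dampedOscillatorSymbol : Continuous (dampedOscillatorSymbol ωn ξ) := by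
  unfold dampedOscillatorSymbol
  fun_prop

variable (hωn : 0 < ωn) (hξ : 0 < ξ)
include hωn hξ

theorem dampedOscillatorSymbol_im_pos {ω : ℝ} (hω : 0 < ω) :
    0 < (dampedOscillatorSymbol ωn ξ ω).im := by
  rw [dampedOscillatorSymbol_im]
  positivity

theorem dampedOscillatorSymbol_ne_zero {ω : ℝ} (hω : 0 < ω) : dampedOscillatorSymbol ωn ξ ω ≠ 0 :=
  ne_of_apply_ne Complex.im (dampedOscillatorSymbol_im_pos hωn hξ hω).ne'

theorem dampedOscillatorSymbol_mem_slitPlane {ω : ℝ} (hω : 0 ≤ ω) :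
    dampedOscillatorSymbol ωn ξ ω ∈ Complex.slitPlane := by
  rcases hω.eq_or_lt with rfl | hω
  · exact Or.inl (by simpa using pow_pos hωn 2)
  · exact Or.inr (dampedOscillatorSymbol_im_pos hωn hξ hω).ne'

theorem strictMonoOn_arg_dampedOscillatorSymbol :
    StrictMonoOn (fun ω => (dampedOscillatorSymbol ωn ξ ω).arg) (Ioi 0) := by
  intro a (ha : 0 < a) b (hb : 0 < b) hab
  rw [Complex.arg_lt_arg_iff_of_im_pos (dampedOscillatorSymbol_im_pos hωn hξ ha)
    (dampedOscillatorSymbol_im_pos hωn hξ hb), dampedOscillatorSymbol_re,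
    dampedOscillatorSymbol_re, dampedOscillatorSymbol_im, dampedOscillatorSymbol_im,
    div_lt_div_iff₀ (by positivity) (by positivity)]
  have hprod : 0 < ξ * ωn * ((b - a) * (ωn ^ 2 + a * b)) := by
    have := sub_pos.2 hab
    positivity
  linarith

end dampedOscillatorSymbol

theorem existsUnique_phase_balance {ωn ξ β : ℝ} (hωn : 0 < ωn) (hξ : 0 < ξ) (hβ : 0 < β) :
    ∃! ω, ω ∈ Ioo 0 (π / β) ∧ (π - ω * β) / 2 = (dampedOscillatorSymbol ωn ξ ω).arg := by
  have hmono : StrictMonoOn (fun ω => (dampedOscillatorSymbol ωn ξ ω).arg + ω * β / 2)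
      (Ioo 0 (π / β)) :=
    ((strictMonoOn_arg_dampedOscillatorSymbol hωn hξ).mono Ioo_subset_Ioi_self).add
      fun _ _ _ _ h => by gcongr
  have hcont : ContinuousOn (fun ω => (dampedOscillatorSymbol ωn ξ ω).arg + ω * β / 2)
      (Icc 0 (π / β)) := fun ω hω =>
    (((Complex.continuousAt_arg (dampedOscillatorSymbol_mem_slitPlane hωn hξ hω.1)).comp
      continuous_dampedOscillatorSymbol.continuousAt).add (by fun_prop)).continuousWithinAt
  have hend : 0 < (dampedOscillatorSymbol ωn ξ (π / β)).arg :=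
    (Complex.arg_mem_Ioo_of_im_pos (dampedOscillatorSymbol_im_pos hωn hξ (by positivity))).1
  refine (existsUnique_congr fun ω => and_congr_right fun _ => ?_).1
    (hmono.existsUnique_mem_Ioo_eq (c := π / 2) (by positivity) hcont ?_ ?_)
  · constructor <;> intro h <;> linarith
  · simp [arg_dampedOscillatorSymbol_zero, pi_pos]
  · field_simp
    linarith

theorem existsUnique_amplitude_balance {lam s m : ℝ} (hlam : 0 < lam) (hs : 0 < s) (hm : 0 < m) :
    ∃! A : ℝ, 0 < A ∧ 4 / (A * π) * s = m / lam := by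
  refine ⟨4 * lam * s / (π * m), ⟨by positivity, by field_simp⟩, fun A ⟨hA, h⟩ => ?_⟩
  field_simp at h ⊢
  linarith

/-- Existence and uniqueness of the amplitude `A` and frequency `ω` solving the
harmonic balance equation for the linearized pendulum
`P(s) = λ/(s² + 2ξωₙs + ωₙ²)` in feedback with the burst controller of width `β`. -/
theorem harmonic_balance_unique (lam ωn ξ β : ℝ)
    (hlam : 0 < lam) (hωn : 0 < ωn) (hξ : ξ ∈ Set.Ioc (0:ℝ) 1) (hβ : 0 < β) :
    ∃! p : ℝ × ℝ, 0 < p.1 ∧ p.2 ∈ Set.Ioo 0 (π / β) ∧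
      (4 / (p.1 * π)) * Real.sin (p.2 * β / 2) =
        ‖((ωn ^ 2 - p.2 ^ 2 : ℝ) : ℂ) + Complex.I * ((2 * ξ * ωn * p.2 : ℝ) : ℂ)‖ / lam ∧
      (π - p.2 * β) / 2 =
        Complex.arg (((ωn ^ 2 - p.2 ^ 2 : ℝ) : ℂ) + Complex.I * ((2 * ξ * ωn * p.2 : ℝ) : ℂ)) := by
  obtain ⟨hξ, -⟩ := hξ
  have hamplitude : ∀ ω ∈ Ioo 0 (π / β),
      ∃! A : ℝ, 0 < A ∧ 4 / (A * π) * sin (ω * β / 2) = ‖dampedOscillatorSymbol ωn ξ ω‖ / lam :=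
    fun ω ⟨hω, hωβ⟩ => existsUnique_amplitude_balance hlam
      (sin_pos_of_pos_of_lt_pi (by positivity) (by linarith [(lt_div_iff₀ hβ).1 hωβ, pi_pos]))
      (norm_pos_iff.2 (dampedOscillatorSymbol_ne_zero hωn hξ hω))
  refine (existsUnique_congr fun p => ?_).1
    ((existsUnique_phase_balance hωn hξ hβ).prod_of_forall fun ω hω => hamplitude ω hω.1)
  exact ⟨fun ⟨⟨hω, hphase⟩, hA, hmag⟩ => ⟨hA, hω, hmag, hphase⟩,
    fun ⟨hA, hω, hmag, hphase⟩ => ⟨⟨hω, hphase⟩, hA, hmag⟩⟩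
end

section
/- Fix ξ > 0 and ω_n > 0. The function ω ↦ arg((ω_n² − ω²) + i·2ξω_nω), where arg is the principal argument of a complex number (Complex.arg), is strictly increasing on (0, ∞) and takes values in the open interval (0, π). -/
open Real

/-- For `y > 0`, `arg (x + I*y) = π/2 - arctan (x/y)`. -/
lemma arg_add_I_mul_eq (x y : ℝ) (hy : 0 < y) :
    Complex.arg ((x : ℂ) + Complex.I * (y : ℂ)) = π / 2 - Real.arctan (x / y) := by
  set a := Real.arctan (x / y) with ha
  have ha1 : -(π / 2) < a := Real.neg_pi_div_two_lt_arctan _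
  have ha2 : a < π / 2 := Real.arctan_lt_pi_div_two _
  have hpi : 0 < π := Real.pi_pos
  have hθ : π / 2 - a ∈ Set.Ioc (-π) π := by
    constructor <;> [linarith; linarith]
  have hr : 0 < Real.sqrt (x ^ 2 + y ^ 2) := by
    apply Real.sqrt_pos.2; positivity
  have hsq : Real.sqrt (1 + (x / y) ^ 2) = Real.sqrt (x ^ 2 + y ^ 2) / y := by
    have h1 : 1 + (x / y) ^ 2 = (x ^ 2 + y ^ 2) / y ^ 2 := by
      field_simp
      ring
    rw [h1, Real.sqrt_div (by positivity), Real.sqrt_sq hy.le]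
  have hcos : Real.cos (π / 2 - a) = x / Real.sqrt (x ^ 2 + y ^ 2) := by
    rw [Real.cos_pi_div_two_sub, ha, Real.sin_arctan, hsq]
    have hyne := hy.ne'
    have hrne := hr.ne'
    field_simp
  have hsin : Real.sin (π / 2 - a) = y / Real.sqrt (x ^ 2 + y ^ 2) := by
    rw [Real.sin_pi_div_two_sub, ha, Real.cos_arctan, hsq, one_div, inv_div]
  have key := Complex.arg_mul_cos_add_sin_mul_I hr hθ
  rw [← Complex.ofReal_cos, ← Complex.ofReal_sin, hcos, hsin] at key
  convert key using 2
  have hrne : (Real.sqrt (x ^ 2 + y ^ 2) : ℂ) ≠ 0 := by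
    exact_mod_cast hr.ne'
  push_cast
  field_simp

/-- The phase `ω ↦ arg((ωₙ² − ω²) + i·2ξωₙω)` (minus the phase of the pendulum
transfer function at `iω`) is strictly increasing on `(0, ∞)` and takes values
in `(0, π)`. -/
theorem phase_strictMono_and_range (ξ ωn : ℝ) (hξ : 0 < ξ) (hωn : 0 < ωn) :
    StrictMonoOn
      (fun ω : ℝ =>
        Complex.arg (((ωn ^ 2 - ω ^ 2 : ℝ) : ℂ) + Complex.I * ((2 * ξ * ωn * ω : ℝ) : ℂ)))
      (Set.Ioi 0) ∧
    ∀ ω : ℝ, 0 < ω →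
      Complex.arg (((ωn ^ 2 - ω ^ 2 : ℝ) : ℂ) + Complex.I * ((2 * ξ * ωn * ω : ℝ) : ℂ))
        ∈ Set.Ioo 0 π := by
  have him : ∀ ω : ℝ, 0 < ω → 0 < 2 * ξ * ωn * ω := fun ω hω => by positivity
  have harg : ∀ ω : ℝ, 0 < ω →
      Complex.arg (((ωn ^ 2 - ω ^ 2 : ℝ) : ℂ) + Complex.I * ((2 * ξ * ωn * ω : ℝ) : ℂ))
        = π / 2 - Real.arctan ((ωn ^ 2 - ω ^ 2) / (2 * ξ * ωn * ω)) := fun ω hω =>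
    arg_add_I_mul_eq _ _ (him ω hω)
  constructor
  · intro a ha b hb hab
    simp only [Set.mem_Ioi] at ha hb
    dsimp only
    rw [harg a ha, harg b hb]
    have : (ωn ^ 2 - b ^ 2) / (2 * ξ * ωn * b) < (ωn ^ 2 - a ^ 2) / (2 * ξ * ωn * a) := by
      rw [div_lt_div_iff₀ (him b hb) (him a ha)]
      nlinarith [mul_pos (mul_pos hξ hωn)
        (mul_pos (sub_pos.2 hab) (add_pos (pow_pos hωn 2) (mul_pos ha hb)))]
    have := Real.arctan_strictMono this
    linarith
  · intro ω hω
    rw [harg ω hω]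
    have h1 : -(π / 2) < Real.arctan ((ωn ^ 2 - ω ^ 2) / (2 * ξ * ωn * ω)) :=
      Real.neg_pi_div_two_lt_arctan _
    have h2 : Real.arctan ((ωn ^ 2 - ω ^ 2) / (2 * ξ * ωn * ω)) < π / 2 :=
      Real.arctan_lt_pi_div_two _
    constructor <;> [linarith; linarith]
end

section
/- Let c > 0 and γ > 0, and define h : ℝ → ℝ by h(t) = γ·exp(−ct) for t > 0 and h(t) = 0 for t ≤ 0. Let H ⊆ ℝ be countable and s : ℝ → ℝ. For t ∈ ℝ, whenever the family (s(τ)·h(t − τ))_{τ ∈ H, τ < t} is summable, define β(t) as its sum. Then for any two reals t_k < t_{k+1} such that the defining families at t_k and t_{k+1} are summable, β(t_{k+1}) = exp(−c(t_{k+1} − t_k))·β(t_k) + Σ_{τ ∈ H, t_k ≤ τ < t_{k+1}} s(τ)·h(t_{k+1} − τ). -/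
/-! The kernel satisfies `h (u + d) = e^{-cd} h u` for `u > 0`, `d ≥ 0`, so every event before
`tk` contributes to `β tk1` exactly `e^{-c(tk1 - tk)}` times its contribution to `β tk`. Splitting
the events before `tk1` at `tk` therefore gives the decayed old sum plus the new events. -/

theorem Summable.tsum_subtype_eq_add_tsum_sdiff {α β : Type*} [AddCommGroup α]
    [UniformSpace α] [IsUniformAddGroup α] [CompleteSpace α] [T2Space α] {f : β → α}
    {s t : Set β} (hst : s ⊆ t) (ht : Summable (f ∘ (↑) : t → α))
    (hs : Summable (f ∘ (↑) : s → α)) :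
    ∑' x : t, f x = ∑' x : s, f x + ∑' x : ↑(t \ s), f x := by
  have hts : Summable (f ∘ (↑) : ↑(t \ s) → α) :=
    ht.comp_injective (Set.inclusion_injective Set.sdiff_subset)
  rw [← hs.tsum_union_disjoint Set.disjoint_sdiff_right hts, Set.union_sdiff_cancel hst]

theorem exp_kernel_add {c γ : ℝ} {h : ℝ → ℝ}
    (hh : ∀ t : ℝ, h t = if 0 < t then γ * Real.exp (-c * t) else 0)
    {u d : ℝ} (hu : 0 < u) (hd : 0 ≤ d) :
    h (u + d) = Real.exp (-c * d) * h u := by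
  rw [hh, hh, if_pos (by linarith), if_pos hu, mul_add, Real.exp_add]
  ring

theorem burst_width_recursion_general (c γ : ℝ)
    (h : ℝ → ℝ) (hh : ∀ t : ℝ, h t = if 0 < t then γ * Real.exp (-c * t) else 0)
    (H : Set ℝ) (s : ℝ → ℝ) (β : ℝ → ℝ)
    (tk tk1 : ℝ) (hlt : tk < tk1)
    (hsumk : Summable (fun τ : {τ : ℝ // τ ∈ H ∧ τ < tk} => s τ * h (tk - τ)))
    (hsumk1 : Summable (fun τ : {τ : ℝ // τ ∈ H ∧ τ < tk1} => s τ * h (tk1 - τ)))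
    (hβk : β tk = ∑' τ : {τ : ℝ // τ ∈ H ∧ τ < tk}, s τ * h (tk - τ))
    (hβk1 : β tk1 = ∑' τ : {τ : ℝ // τ ∈ H ∧ τ < tk1}, s τ * h (tk1 - τ)) :
    β tk1 = Real.exp (-c * (tk1 - tk)) * β tk +
      ∑' τ : {τ : ℝ // τ ∈ H ∧ tk ≤ τ ∧ τ < tk1}, s τ * h (tk1 - τ) := by
  set decay := Real.exp (-c * (tk1 - tk))
  have hpast : ∀ τ : {τ : ℝ // τ ∈ H ∧ τ < tk},
      s τ * h (tk1 - τ) = decay * (s τ * h (tk - τ)) := fun τ => by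
    rw [show tk1 - τ = (tk - τ) + (tk1 - tk) by ring,
      exp_kernel_add hh (sub_pos.2 τ.2.2) (sub_nonneg.2 hlt.le)]
    ring
  have hpast_sum :
      ∑' τ : {τ : ℝ // τ ∈ H ∧ τ < tk}, s τ * h (tk1 - τ) = decay * β tk := by
    rw [hβk, ← tsum_mul_left]
    exact tsum_congr hpast
  have hsplit : {τ | τ ∈ H ∧ τ < tk1} \ {τ | τ ∈ H ∧ τ < tk} =
      {τ | τ ∈ H ∧ tk ≤ τ ∧ τ < tk1} := by
    ext τ
    simp only [Set.mem_sdiff, Set.mem_ofPred_eq, not_and, not_lt]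
    tauto
  have hsum_split := Summable.tsum_subtype_eq_add_tsum_sdiff (f := fun τ => s τ * h (tk1 - τ))
    (s := {τ | τ ∈ H ∧ τ < tk}) (t := {τ | τ ∈ H ∧ τ < tk1})
    (fun τ hτ => ⟨hτ.1, hτ.2.trans hlt⟩) hsumk1
    ((hsumk.mul_left decay).congr fun τ => (hpast τ).symm)
  rw [hsplit] at hsum_split
  rw [hβk1, ← hpast_sum]
  exact hsum_split

/-- Recursion for the burst width produced by the first-order adaptive unit with
impulse response `h(t) = γ e^{−ct}` for `t > 0` and `h(t) = 0` for `t ≤ 0`. -/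
theorem burst_width_recursion (c γ : ℝ) (hc : 0 < c) (hγ : 0 < γ)
    (h : ℝ → ℝ) (hh : ∀ t : ℝ, h t = if 0 < t then γ * Real.exp (-c * t) else 0)
    (H : Set ℝ) (hH : H.Countable) (s : ℝ → ℝ) (β : ℝ → ℝ)
    (tk tk1 : ℝ) (hlt : tk < tk1)
    (hsumk : Summable (fun τ : {τ : ℝ // τ ∈ H ∧ τ < tk} => s τ * h (tk - τ)))
    (hsumk1 : Summable (fun τ : {τ : ℝ // τ ∈ H ∧ τ < tk1} => s τ * h (tk1 - τ)))
    (hβk : β tk = ∑' τ : {τ : ℝ // τ ∈ H ∧ τ < tk}, s τ * h (tk - τ))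
    (hβk1 : β tk1 = ∑' τ : {τ : ℝ // τ ∈ H ∧ τ < tk1}, s τ * h (tk1 - τ)) :
    β tk1 = Real.exp (-c * (tk1 - tk)) * β tk +
      ∑' τ : {τ : ℝ // τ ∈ H ∧ tk ≤ τ ∧ τ < tk1}, s τ * h (tk1 - τ) :=
  burst_width_recursion_general c γ h hh H s β tk tk1 hlt hsumk hsumk1 hβk hβk1
end

section
/- Let g₀ > 0, g₁ ∈ (0,1), and g₂ > 0. Then x_fix = min{0, (g₂ − g₀)/(1 − g₁)} is the unique real number x such that there exists s ∈ Sgn(x) with x = −g₀ + g₁·x − g₂·s; moreover x_fix ≤ 0. -/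
/-- The set-valued signum function. -/
def Sgn (x : ℝ) : Set ℝ :=
  if x < 0 then {-1} else if x = 0 then Set.Icc (-1) 1 else {1}

/-- The difference inclusion `x⁺ ∈ −g₀ + g₁x − g₂·Sgn(x)` has the unique fixed
point `min{0, (g₂ − g₀)/(1 − g₁)}`, which is nonpositive. -/
theorem fixed_point_unique (g₀ g₁ g₂ : ℝ) (hg₀ : 0 < g₀) (hg₁ : g₁ ∈ Set.Ioo (0:ℝ) 1)
    (hg₂ : 0 < g₂) :
    (∃ s ∈ Sgn (min 0 ((g₂ - g₀) / (1 - g₁))),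
      min 0 ((g₂ - g₀) / (1 - g₁)) = -g₀ + g₁ * min 0 ((g₂ - g₀) / (1 - g₁)) - g₂ * s) ∧
    (∀ x : ℝ, (∃ s ∈ Sgn x, x = -g₀ + g₁ * x - g₂ * s) → x = min 0 ((g₂ - g₀) / (1 - g₁))) ∧
    min 0 ((g₂ - g₀) / (1 - g₁)) ≤ 0 := by
  obtain ⟨hg₁0, hg₁1⟩ := hg₁
  have h1 : (0:ℝ) < 1 - g₁ := by linarith
  set r := (g₂ - g₀) / (1 - g₁) with hr
  have hrval : r * (1 - g₁) = g₂ - g₀ := div_mul_cancel₀ _ (ne_of_gt h1)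
  refine ⟨?_, ?_, min_le_left _ _⟩
  · rcases le_or_gt g₀ g₂ with h | h
    · have hr0 : 0 ≤ r := div_nonneg (by linarith) h1.le
      have hmin : min 0 r = 0 := min_eq_left hr0
      refine ⟨-g₀ / g₂, ?_, ?_⟩
      · rw [hmin, Sgn]
        simp only [lt_irrefl, if_false, if_pos rfl]
        constructor
        · rw [le_div_iff₀ hg₂]; linarith
        · rw [div_le_iff₀ hg₂]; linarith
      · rw [hmin]
        field_simp; ring
    · have hr0 : r < 0 := div_neg_of_neg_of_pos (by linarith) h1
      have hmin : min 0 r = r := min_eq_right hr0.le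
      refine ⟨-1, ?_, ?_⟩
      · rw [hmin, Sgn, if_pos hr0]; rfl
      · rw [hmin]; nlinarith [hrval]
  · rintro x ⟨s, hs, hx⟩
    rcases lt_trichotomy x 0 with hx0 | hx0 | hx0
    · rw [Sgn, if_pos hx0] at hs
      have : s = -1 := hs
      subst this
      have hxr : x = r := by
        rw [hr, eq_div_iff (ne_of_gt h1)]; nlinarith
      rw [hxr] at hx0 ⊢
      exact (min_eq_right hx0.le).symm
    · subst hx0
      rw [Sgn] at hs
      simp only [lt_irrefl, if_false, if_pos rfl] at hs
      have hsval : s = -g₀ / g₂ := by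
        field_simp at hx ⊢; linarith
      have : g₀ ≤ g₂ := by
        have := hs.1
        rw [hsval, le_div_iff₀ hg₂] at this; linarith
      have hr0 : 0 ≤ r := div_nonneg (by linarith) h1.le
      exact (min_eq_left hr0).symm
    · rw [Sgn, if_neg (not_lt.2 hx0.le), if_neg (ne_of_gt hx0)] at hs
      have : s = 1 := hs
      subst this
      nlinarith
end

section
/- Let g₀ ≥ g₂ > 0 and g₁ ∈ (0,1), and set x_fix = −(g₀ − g₂)/(1 − g₁). If (x_k)_{k∈ℕ} is a solution of the difference inclusion x_{k+1} ∈ −g₀ + g₁·x_k − g₂·Sgn(x_k) with x₀ < 0, then x_k < 0 for all k (the set of negative reals is invariant) and x_k − x_fix = g₁^k·(x₀ − x_fix) for all k ∈ ℕ, so x_k converges geometrically to x_fix. -/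
/-- For `g₀ ≥ g₂ > 0` and `g₁ ∈ (0,1)`, the negative half-line is invariant for
the difference inclusion `x_{k+1} ∈ −g₀ + g₁·x_k − g₂·Sgn(x_k)`, and on it the
error contracts geometrically to the fixed point `−(g₀ − g₂)/(1 − g₁)`. -/
theorem negative_invariance_geometric (g₀ g₁ g₂ : ℝ)
    (hg₀ : g₂ ≤ g₀) (hg₂ : 0 < g₂) (hg₁ : g₁ ∈ Set.Ioo (0:ℝ) 1)
    (x : ℕ → ℝ)
    (hx : ∀ k : ℕ, ∃ s ∈ Sgn (x k), x (k + 1) = -g₀ + g₁ * x k - g₂ * s)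
    (hx0 : x 0 < 0) :
    ∀ k : ℕ, x k < 0 ∧
      x k - (-(g₀ - g₂) / (1 - g₁)) = g₁ ^ k * (x 0 - (-(g₀ - g₂) / (1 - g₁))) := by
  obtain ⟨hg₁0, hg₁1⟩ := hg₁
  have h1 : (1 : ℝ) - g₁ ≠ 0 := by linarith
  intro k
  induction k with
  | zero => exact ⟨hx0, by simp⟩
  | succ k ih =>
    obtain ⟨hneg, heq⟩ := ih
    obtain ⟨s, hs, hstep⟩ := hx k
    have hsm : s = -1 := by
      simpa [Sgn, if_pos hneg] using hs
    subst hsm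
    have hrec : x (k + 1) = g₁ * x k - (g₀ - g₂) := by rw [hstep]; ring
    constructor
    · have : g₁ * x k < 0 := mul_neg_of_pos_of_neg hg₁0 hneg
      linarith
    · have hfix : -(g₀ - g₂) / (1 - g₁) * (1 - g₁) = -(g₀ - g₂) :=
        div_mul_cancel₀ _ h1
      rw [hrec, pow_succ, mul_comm (g₁ ^ k) g₁, mul_assoc, ← heq]
      nlinarith [hfix]
end

section
/- Let g₀ > g₂ > 0 and g₁ ∈ (0,1). Then every solution (x_k)_{k∈ℕ} of the difference inclusion x_{k+1} ∈ −g₀ + g₁·x_k − g₂·Sgn(x_k) eventually enters the set of negative reals: there exists k ∈ ℕ with x_k < 0. -/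
/-- For `g₀ > g₂ > 0` and `g₁ ∈ (0,1)`, every solution of the difference
inclusion `x_{k+1} ∈ −g₀ + g₁·x_k − g₂·Sgn(x_k)` eventually becomes negative. -/
theorem eventually_negative (g₀ g₁ g₂ : ℝ)
    (hg₀ : g₂ < g₀) (hg₂ : 0 < g₂) (hg₁ : g₁ ∈ Set.Ioo (0:ℝ) 1)
    (x : ℕ → ℝ)
    (hx : ∀ k : ℕ, ∃ s ∈ Sgn (x k), x (k + 1) = -g₀ + g₁ * x k - g₂ * s) :
    ∃ k : ℕ, x k < 0 := by
  by_contra h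
  push_neg at h
  obtain ⟨hg₁0, hg₁1⟩ := hg₁
  have key : ∀ k, x (k + 1) ≤ x k - (g₀ - g₂) := by
    intro k
    obtain ⟨s, hs, heq⟩ := hx k
    have hxk := h k
    rcases eq_or_lt_of_le hxk with hz | hp
    · -- x k = 0
      simp only [Sgn, ← hz, lt_irrefl, if_false, if_pos rfl, if_neg (lt_irrefl (0:ℝ))] at hs
      have hs1 : s ≥ -1 := hs.1
      rw [heq, ← hz]
      nlinarith
    · -- x k > 0
      have : Sgn (x k) = {1} := by
        simp [Sgn, not_lt_of_gt hp, ne_of_gt hp]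
      rw [this] at hs
      simp at hs
      rw [heq, hs]
      nlinarith
  have decay : ∀ k, x k ≤ x 0 - k * (g₀ - g₂) := by
    intro k
    induction k with
    | zero => simp
    | succ n ih =>
      have := key n
      push_cast
      nlinarith
  obtain ⟨n, hn⟩ := Archimedean.arch (x 0) (sub_pos.mpr hg₀)
  have h1 := decay (n + 1)
  have h2 := h (n + 1)
  simp only [nsmul_eq_mul] at hn
  push_cast at h1
  nlinarith
end

section
/- Let g₂ > g₀ > 0 and g₁ ∈ (0,1). For every x ∈ ℝ with |x| > (g₀ + g₂)/(1 + g₁) and every s ∈ Sgn(x), it holds that |−g₀ + g₁·x − g₂·s| < |x|. -/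
/-- One-step Lyapunov decrease with `V(x) = |x|`: in the regime `g₂ > g₀ > 0`,
`g₁ ∈ (0,1)`, the state strictly decreases in absolute value whenever
`|x| > (g₀ + g₂)/(1 + g₁)`. -/
theorem one_step_lyapunov_decrease (g₀ g₁ g₂ : ℝ)
    (hg₀ : 0 < g₀) (hg₂ : g₀ < g₂) (hg₁ : g₁ ∈ Set.Ioo (0:ℝ) 1) :
    ∀ x : ℝ, (g₀ + g₂) / (1 + g₁) < |x| → ∀ s ∈ Sgn x,
      |(-g₀ + g₁ * x - g₂ * s)| < |x| := by
  obtain ⟨h1, h2⟩ := hg₁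
  intro x hx s hs
  have hpos : (0:ℝ) < (g₀ + g₂) / (1 + g₁) := by apply div_pos (by linarith) (by linarith)
  have hx0 : x ≠ 0 := by
    intro h; rw [h, abs_zero] at hx; linarith
  have hd : (g₀ + g₂) < (1 + g₁) * |x| := by
    rw [div_lt_iff₀ (by linarith)] at hx; linarith [hx]
  rcases lt_or_gt_of_ne hx0 with hneg | hpos'
  · rw [Sgn, if_pos hneg] at hs
    rw [Set.mem_singleton_iff] at hs
    subst hs
    rw [abs_of_neg hneg] at hx hd ⊢
    rw [abs_lt]
    constructor <;> nlinarith
  · rw [Sgn, if_neg (not_lt.mpr hpos'.le), if_neg hx0] at hs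
    rw [Set.mem_singleton_iff] at hs
    subst hs
    rw [abs_of_pos hpos'] at hx hd ⊢
    rw [abs_lt]
    constructor <;> nlinarith
end

section
/- Fix c > 0 and ω* > 0 and set q = exp(−cπ/(2ω*)) ∈ (0,1). Let 0 < β̲ ≤ β̄ and define γ_opt = max{ β̄·(1 − q⁴)/(3q − q³), β̲·(1 − q²)/q }. Then γ_opt minimizes the worst-case cost: for every γ > 0, sup_{β* ∈ [β̲, β̄]} J(γ, β*) ≥ sup_{β* ∈ [β̲, β̄]} J(γ_opt, β*), and moreover sup_{β* ∈ [β̲, β̄]} J(γ_opt, β*) = J(γ_opt, β̄). -/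
open Real

/-- Steady-state error of the adaptation dynamics (stable fixed-point regime). -/
noncomputable def Js (q γ βs : ℝ) : ℝ := βs - γ * q / (1 - q ^ 2)

/-- Ultimate bound of the adaptation dynamics (unstable fixed-point regime). -/
noncomputable def Ju (q γ βs : ℝ) : ℝ := ((1 - q ^ 2) * βs + γ * q) / (1 + q ^ 2)

/-- Piecewise performance index of the slow adaptation dynamics. -/
noncomputable def J (q γ βs : ℝ) : ℝ :=
  if γ * q / (1 - q ^ 2) ≤ βs then Js q γ βs else Ju q γ βs

/-!
Write `t = γq/(1 - q²)` for the value of `β*` at which the fixed point changes stability. On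
`β* ≥ t` the cost is `β* - t`, on `β* < t` it is `(1 - q²)(β* + t)/(1 + q²)`, which stays below
its limit `2t(1 - q²)/(1 + q²)` at `β* = t`. The worst case over `[β̲, β̄]` is therefore governed
by the stable error `β̄ - t` at the right endpoint against that limit, and the two balance at
`t* = β̄(1 + q²)/(3 - q²)`. The gain `γ_opt` is the one with threshold `t₀ = max t* β̲`: its worst
case is `β̄ - t₀`, attained at `β̄`. Any other gain either has threshold `t ≤ t₀`, and then costs
`β̄ - t ≥ β̄ - t₀` at `β̄`, or has `t > t₀`, and then costs more than `2t₀(1 - q²)/(1 + q²) ≥ β̄ - t₀`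
at `β* = t₀`.
-/

noncomputable def threshold (q γ : ℝ) : ℝ := γ * q / (1 - q ^ 2)

noncomputable def balancedThreshold (q β : ℝ) : ℝ := β * (1 + q ^ 2) / (3 - q ^ 2)

section

variable {q γ β : ℝ}

lemma J_of_threshold_le (h : threshold q γ ≤ β) : J q γ β = β - threshold q γ :=
  if_pos h

lemma J_of_lt_threshold (hq : q ^ 2 ≠ 1) (h : β < threshold q γ) :
    J q γ β = (1 - q ^ 2) * (β + threshold q γ) / (1 + q ^ 2) := by
  have : 1 - q ^ 2 ≠ 0 := sub_ne_zero.2 (Ne.symm hq)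
  simp only [J, Ju, threshold] at h ⊢
  rw [if_neg h.not_ge]
  field_simp

lemma J_le_max (hq : q ^ 2 ≤ 1) {b : ℝ} (hβ : β ≤ b) :
    J q γ β ≤ max (b - threshold q γ) (Ju q γ b) := by
  unfold J
  split_ifs
  · exact le_max_of_le_left (by unfold Js threshold; linarith)
  · refine le_max_of_le_right ?_
    unfold Ju
    gcongr

lemma bddAbove_J_image (hq : q ^ 2 ≤ 1) (a b : ℝ) : BddAbove (J q γ '' Set.Icc a b) :=
  ⟨_, by rintro _ ⟨β, ⟨-, hβ⟩, rfl⟩; exact J_le_max hq hβ⟩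

lemma threshold_max (hq0 : 0 < q) (hq1 : q ^ 2 < 1) (a b : ℝ) :
    threshold q (max a b) = max (threshold q a) (threshold q b) := by
  refine Monotone.map_max fun x y hxy => ?_
  unfold threshold
  gcongr

lemma threshold_balancing_gain (hq0 : 0 < q) (hq1 : q ^ 2 < 1) (b : ℝ) :
    threshold q (b * (1 - q ^ 4) / (3 * q - q ^ 3)) = balancedThreshold q b := by
  have h1 : 1 - q ^ 2 ≠ 0 := by linarith
  have h3 : 3 - q ^ 2 ≠ 0 := by linarith
  have h3q : 3 * q - q ^ 3 = q * (3 - q ^ 2) := by ring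
  unfold threshold balancedThreshold
  rw [h3q]
  field_simp
  ring

lemma threshold_lower_gain (hq0 : 0 < q) (hq1 : q ^ 2 < 1) (b : ℝ) :
    threshold q (b * (1 - q ^ 2) / q) = b := by
  have h1 : 1 - q ^ 2 ≠ 0 := by linarith
  unfold threshold
  field_simp

lemma balancedThreshold_lt (hq : q ^ 2 < 1) {b : ℝ} (hb : 0 < b) : balancedThreshold q b < b := by
  unfold balancedThreshold
  rw [div_lt_iff₀ (by linarith)]
  nlinarith

lemma sub_le_unstable_limit_iff (hq : q ^ 2 < 1) {b t : ℝ} :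
    b - t ≤ (1 - q ^ 2) * (t + t) / (1 + q ^ 2) ↔ balancedThreshold q b ≤ t := by
  rw [balancedThreshold, le_div_iff₀ (by positivity), div_le_iff₀ (by linarith)]
  constructor <;> intro h <;> linarith

lemma unstable_limit_le_sub_iff (hq : q ^ 2 < 1) {b t : ℝ} :
    (1 - q ^ 2) * (t + t) / (1 + q ^ 2) ≤ b - t ↔ t ≤ balancedThreshold q b := by
  rw [balancedThreshold, div_le_iff₀ (by positivity), le_div_iff₀ (by linarith)]
  constructor <;> intro h <;> linarith

end

section

variable {q βlow βhigh : ℝ}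

lemma isGreatest_J_image (hq : q ^ 2 < 1) {γ : ℝ} (hββ : βlow ≤ βhigh)
    (hγ : threshold q γ = max (balancedThreshold q βhigh) βlow) (ht : threshold q γ ≤ βhigh) :
    IsGreatest (J q γ '' Set.Icc βlow βhigh) (βhigh - threshold q γ) := by
  refine ⟨⟨βhigh, ⟨hββ, le_rfl⟩, J_of_threshold_le ht⟩, ?_⟩
  rintro _ ⟨β, ⟨hβlow, hβhigh⟩, rfl⟩
  rcases le_or_gt (threshold q γ) β with hstable | hunstable
  · rw [J_of_threshold_le hstable]
    linarith
  · have hbalanced : threshold q γ = balancedThreshold q βhigh := by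
      rw [hγ, max_eq_left]
      by_contra! hlt
      rw [hγ, max_eq_right hlt.le] at hunstable
      linarith
    rw [J_of_lt_threshold hq.ne hunstable]
    calc (1 - q ^ 2) * (β + threshold q γ) / (1 + q ^ 2)
        ≤ (1 - q ^ 2) * (threshold q γ + threshold q γ) / (1 + q ^ 2) := by gcongr
      _ ≤ βhigh - threshold q γ := (unstable_limit_le_sub_iff hq).2 hbalanced.le

lemma exists_sub_max_le_J (hq : q ^ 2 < 1) (hββ : βlow ≤ βhigh) (hβhigh : 0 < βhigh) (γ : ℝ) :
    ∃ β ∈ Set.Icc βlow βhigh, βhigh - max (balancedThreshold q βhigh) βlow ≤ J q γ β := by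
  set t₀ := max (balancedThreshold q βhigh) βlow
  have ht₀ : t₀ ≤ βhigh := max_le (balancedThreshold_lt hq hβhigh).le hββ
  rcases le_or_gt (threshold q γ) t₀ with hle | hlt
  · refine ⟨βhigh, ⟨hββ, le_rfl⟩, ?_⟩
    rw [J_of_threshold_le (hle.trans ht₀)]
    linarith
  · refine ⟨t₀, ⟨le_max_right _ _, ht₀⟩, ?_⟩
    rw [J_of_lt_threshold hq.ne hlt]
    calc βhigh - t₀ ≤ (1 - q ^ 2) * (t₀ + t₀) / (1 + q ^ 2) :=
          (sub_le_unstable_limit_iff hq).2 (le_max_left _ _)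
      _ ≤ (1 - q ^ 2) * (t₀ + threshold q γ) / (1 + q ^ 2) := by gcongr

end

/-- The gain `γ_opt = max{β̄(1 − q⁴)/(3q − q³), β̲(1 − q²)/q}` solves the robust
min–max optimization `min_{γ>0} sup_{β* ∈ [β̲,β̄]} J(γ, β*)`, and at `γ_opt` the
worst case is attained at `β* = β̄`. -/
theorem robust_optimal_gain (c ωs βlow βhigh : ℝ) (hc : 0 < c) (hωs : 0 < ωs)
    (hβlow : 0 < βlow) (hββ : βlow ≤ βhigh) :
    ∀ q : ℝ, q = Real.exp (-(c * π / (2 * ωs))) →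
      ∀ γopt : ℝ, γopt = max (βhigh * (1 - q ^ 4) / (3 * q - q ^ 3))
          (βlow * (1 - q ^ 2) / q) →
        (∀ γ : ℝ, 0 < γ →
          sSup ((fun βs => J q γopt βs) '' Set.Icc βlow βhigh) ≤
            sSup ((fun βs => J q γ βs) '' Set.Icc βlow βhigh)) ∧
        sSup ((fun βs => J q γopt βs) '' Set.Icc βlow βhigh) = J q γopt βhigh := by
  intro q hq γopt hγopt
  have hq0 : 0 < q := hq ▸ Real.exp_pos _
  have hq1 : q ^ 2 < 1 :=
    pow_lt_one₀ hq0.le (hq ▸ Real.exp_lt_one_iff.2 (neg_neg_of_pos (by positivity))) two_ne_zero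
  have hβhigh : 0 < βhigh := hβlow.trans_le hββ
  have ht : threshold q γopt = max (balancedThreshold q βhigh) βlow := by
    rw [hγopt, threshold_max hq0 hq1, threshold_balancing_gain hq0 hq1, threshold_lower_gain hq0 hq1]
  have ht_le : threshold q γopt ≤ βhigh := ht ▸ max_le (balancedThreshold_lt hq1 hβhigh).le hββ
  have hsup := (isGreatest_J_image hq1 hββ ht ht_le).csSup_eq
  refine ⟨fun γ _ => ?_, by rw [hsup, J_of_threshold_le ht_le]⟩
  obtain ⟨β, hβ, hle⟩ := exists_sub_max_le_J hq1 hββ hβhigh γ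
  rw [hsup, ht]
  exact hle.trans (le_csSup (bddAbove_J_image hq1.le _ _) ⟨β, hβ, rfl⟩)
end
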